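/- arXiv:2003.09703 — 2 statements merged into one kernel-verified Lean document; each statement's English description precedes it below -/
import Mathlib

section
/- Let ν be a non-degenerate probability measure on ℝ with support contained in (−∞, b]. Then for all real z₁, z₂ with b < z₁ < z₂ one has the strict inequality G_ν(z₁) − G_ν(z₂) > (z₂ − z₁) G_ν(z₁) G_ν(z₂); equivalently, 1/G_ν(z₂) − 1/G_ν(z₁) > z₂ − z₁. -/
/-!
Since `(z₁ - x)⁻¹ - (z₂ - x)⁻¹ = (z₂ - z₁) (z₁ - x)⁻¹ (z₂ - x)⁻¹`, the quantity
`G(z₁) - G(z₂) - (z₂ - z₁) G(z₁) G(z₂)` equals `(z₂ - z₁)` times the covariance under `ν` of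
`x ↦ (z₁ - x)⁻¹` and `x ↦ (z₂ - x)⁻¹`. Both functions increase strictly on `(-∞, z₁)`, which
carries `ν`, so by the strict Chebyshev inequality this covariance is positive unless `ν` is a
point mass. Dividing by `G(z₁) G(z₂) > 0` gives the second inequality.
-/

open MeasureTheory Filter Topology Set

/-- The Cauchy transform `G_ν(z) = ∫ 1/(z-x) dν(x)` of a measure on `ℝ`, for real `z`. -/
noncomputable def cauchyT (ν : Measure ℝ) (z : ℝ) : ℝ := ∫ x, (z - x)⁻¹ ∂ν

open ProbabilityTheory

namespace MeasureTheory.Measure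

variable {α : Type*} [MeasurableSpace α] [MeasurableSingletonClass α] {μ : Measure α}

theorem eq_dirac_of_ae_eq [IsProbabilityMeasure μ] {a : α} (h : ∀ᵐ x ∂μ, x = a) :
    μ = dirac a := by
  rw [ae_mem_finset_iff (μ := μ) (s := {a}) |>.1 (by simpa using h), Finset.sum_singleton,
    (prob_compl_eq_zero_iff (measurableSet_singleton a)).1 (ae_iff.1 h), one_smul]

end MeasureTheory.Measure

namespace ProbabilityTheory

variable {Ω : Type*} {mΩ : MeasurableSpace Ω} {μ : Measure Ω} [IsProbabilityMeasure μ]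
  {X Y : Ω → ℝ}

theorem integral_sub_integral_mul_sub_eq_covariance (hX : MemLp X 2 μ) (hY : MemLp Y 2 μ)
    (c : ℝ) : ∫ ω, (X ω - μ[X]) * (Y ω - c) ∂μ = cov[X, Y; μ] := by
  have hXc : MemLp (fun ω ↦ X ω - μ[X]) 2 μ := hX.sub (memLp_const _)
  have hYc : MemLp (fun ω ↦ Y ω - μ[Y]) 2 μ := hY.sub (memLp_const _)
  have hsplit : ∀ ω, (X ω - μ[X]) * (Y ω - c)
      = (X ω - μ[X]) * (Y ω - μ[Y]) + (μ[Y] - c) * (X ω - μ[X]) := fun ω ↦ by ring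
  have hXY : Integrable (fun ω ↦ (X ω - μ[X]) * (Y ω - μ[Y])) μ := hXc.integrable_mul hYc
  simp_rw [hsplit]
  rw [integral_add hXY ((hXc.integrable one_le_two).const_mul _),
    integral_const_mul, integral_sub (hX.integrable one_le_two) (integrable_const _),
    integral_const, probReal_univ, one_smul, sub_self, mul_zero, add_zero, covariance]

theorem covariance_pos_of_strictMonoOn {α : Type*} [LinearOrder α] [MeasurableSpace α]
    [MeasurableSingletonClass α] {μ : Measure α} [IsProbabilityMeasure μ] {f g : α → ℝ}
    {s : Set α} (hf : StrictMonoOn f s) (hg : StrictMonoOn g s) (hs : ∀ᵐ x ∂μ, x ∈ s)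
    (hfi : MemLp f 2 μ) (hgi : MemLp g 2 μ) {w : α} (hw : w ∈ s) (hfw : f w = μ[f])
    (hμ : μ ≠ Measure.dirac w) : 0 < cov[f, g; μ] := by
  have hpos : ∀ x ∈ s, x ≠ w → 0 < (f x - f w) * (g x - g w) := by
    intro x hx hxw
    rcases hxw.lt_or_gt with hlt | hlt
    · exact mul_pos_of_neg_of_neg (sub_neg.2 (hf hx hw hlt)) (sub_neg.2 (hg hx hw hlt))
    · exact mul_pos (sub_pos.2 (hf hw hx hlt)) (sub_pos.2 (hg hw hx hlt))
  have hnonneg : 0 ≤ᵐ[μ] fun x ↦ (f x - f w) * (g x - g w) := by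
    filter_upwards [hs] with x hx
    rcases eq_or_ne x w with rfl | hxw
    · simp
    · exact (hpos x hx hxw).le
  have hint : Integrable (fun x ↦ (f x - f w) * (g x - g w)) μ :=
    (hfi.sub (memLp_const _)).integrable_mul (hgi.sub (memLp_const _))
  -- Centring `g` at `g w` rather than at its mean makes the integrand pointwise nonnegative.
  rw [← integral_sub_integral_mul_sub_eq_covariance hfi hgi (g w), ← hfw]
  refine (integral_nonneg_of_ae hnonneg).lt_of_ne fun h ↦ hμ (Measure.eq_dirac_of_ae_eq ?_)
  filter_upwards [hs, (integral_eq_zero_iff_of_nonneg_ae hnonneg hint).1 h.symm] with x hx hx0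
  by_contra hxw
  exact (hpos x hx hxw).ne' hx0

end ProbabilityTheory

theorem strictMonoOn_inv_sub (z : ℝ) : StrictMonoOn (fun x : ℝ ↦ (z - x)⁻¹) (Iio z) :=
  fun _ _ _ hy hxy ↦ inv_strictAnti₀ (sub_pos.2 hy) (sub_lt_sub_left hxy z)

section CauchyTransform

variable {ν : Measure ℝ} {b : ℝ}

theorem memLp_inv_sub [IsFiniteMeasure ν] (hν : ∀ᵐ x ∂ν, x ≤ b) {z : ℝ} (hz : b < z)
    (p : ENNReal) : MemLp (fun x ↦ (z - x)⁻¹) p ν := by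
  refine .of_bound (measurable_const.sub measurable_id).inv.aestronglyMeasurable (z - b)⁻¹ ?_
  filter_upwards [hν] with x hx
  rw [Real.norm_eq_abs, abs_of_pos (inv_pos.2 (by linarith))]
  exact inv_anti₀ (sub_pos.2 hz) (by linarith)

theorem cauchyT_pos [IsProbabilityMeasure ν] (hν : ∀ᵐ x ∂ν, x ≤ b) {z : ℝ} (hz : b < z) :
    0 < cauchyT ν z := by
  have hlt : ∀ᵐ x ∂ν, x ∈ Iio z := hν.mono fun x hx ↦ hx.trans_lt hz
  have hnonneg : 0 ≤ᵐ[ν] fun x ↦ (z - x)⁻¹ := hlt.mono fun x hx ↦ (inv_pos.2 (sub_pos.2 hx)).le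
  rw [cauchyT, integral_pos_iff_support_of_nonneg_ae hnonneg
    ((memLp_inv_sub hν hz 1).integrable le_rfl)]
  refine lt_of_lt_of_le ?_ (measure_mono fun x (hx : x ∈ Iio z) ↦ (inv_pos.2 (sub_pos.2 hx)).ne')
  rw [(prob_compl_eq_zero_iff measurableSet_Iio).1 (ae_iff.1 hlt)]
  exact one_pos

theorem cauchyT_sub_cauchyT [IsFiniteMeasure ν] (hν : ∀ᵐ x ∂ν, x ≤ b) {z₁ z₂ : ℝ}
    (h₁ : b < z₁) (h₂ : b < z₂) :
    cauchyT ν z₁ - cauchyT ν z₂ = (z₂ - z₁) * ∫ x, (z₁ - x)⁻¹ * (z₂ - x)⁻¹ ∂ν := by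
  rw [cauchyT, cauchyT, ← integral_sub ((memLp_inv_sub hν h₁ 1).integrable le_rfl)
    ((memLp_inv_sub hν h₂ 1).integrable le_rfl), ← integral_const_mul]
  refine integral_congr_ae ?_
  filter_upwards [hν] with x hx
  have : z₁ - x ≠ 0 := by linarith
  have : z₂ - x ≠ 0 := by linarith
  field_simp
  ring

theorem cauchyT_mul_cauchyT_lt_integral [IsProbabilityMeasure ν] (hν : ∀ᵐ x ∂ν, x ≤ b)
    (hnd : ∀ a, ν ≠ Measure.dirac a) {z₁ z₂ : ℝ}
    (h₁ : b < z₁) (h₁₂ : z₁ < z₂) :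
    cauchyT ν z₁ * cauchyT ν z₂ < ∫ x, (z₁ - x)⁻¹ * (z₂ - x)⁻¹ ∂ν := by
  have hf := memLp_inv_sub hν h₁ 2
  have hg := memLp_inv_sub hν (h₁.trans h₁₂) 2
  -- The mean `cauchyT ν z₁ > 0` of `x ↦ (z₁ - x)⁻¹` is attained at `z₁ - (cauchyT ν z₁)⁻¹ < z₁`.
  have hcov := covariance_pos_of_strictMonoOn (strictMonoOn_inv_sub z₁)
    ((strictMonoOn_inv_sub z₂).mono (Iio_subset_Iio h₁₂.le)) (hν.mono fun x hx ↦ hx.trans_lt h₁)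
    hf hg (sub_lt_self z₁ (inv_pos.2 (cauchyT_pos hν h₁))) (by rw [sub_sub_cancel, inv_inv]; rfl)
    (hnd _)
  rwa [covariance_eq_sub hf hg, sub_pos] at hcov

end CauchyTransform

/-- for a non-degenerate probability measure `ν` with support in `(-∞, b]`
and `b < z₁ < z₂` one has `G_ν(z₁) - G_ν(z₂) > (z₂ - z₁) G_ν(z₁) G_ν(z₂)`;
equivalently `1/G_ν(z₂) - 1/G_ν(z₁) > z₂ - z₁`. -/
theorem cauchy_strict_inequality
    (ν : Measure ℝ) [IsProbabilityMeasure ν]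
    (hnd : ∀ a : ℝ, ν ≠ Measure.dirac a)
    (b : ℝ) (hb : ν (Set.Ioi b) = 0) :
    ∀ z₁ z₂ : ℝ, b < z₁ → z₁ < z₂ →
      cauchyT ν z₁ - cauchyT ν z₂ > (z₂ - z₁) * cauchyT ν z₁ * cauchyT ν z₂ ∧
      1 / cauchyT ν z₂ - 1 / cauchyT ν z₁ > z₂ - z₁ := by
  intro z₁ z₂ h₁ h₁₂
  have hle : ∀ᵐ x ∂ν, x ≤ b := ae_iff.2 (measure_mono_null (fun _ ↦ not_le.1) hb)
  have hG₁ := cauchyT_pos hle h₁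
  have hG₂ := cauchyT_pos hle (h₁.trans h₁₂)
  have hlt := mul_lt_mul_of_pos_left (cauchyT_mul_cauchyT_lt_integral hle hnd h₁ h₁₂)
    (sub_pos.2 h₁₂)
  rw [← cauchyT_sub_cauchyT hle h₁ (h₁.trans h₁₂)] at hlt
  refine ⟨by linarith, ?_⟩
  rw [gt_iff_lt, div_sub_div _ _ hG₂.ne' hG₁.ne', lt_div_iff₀ (mul_pos hG₂ hG₁)]
  linarith
end

section
/- Let ν be a non-degenerate probability measure on ℝ with support bounded from above and finite mean m₀ = m₀(ν), α > 0, and ρ = ν^{⊎α} its boolean convolution power. Then the variance functions of the CSK families generated by ν and by ρ exist, and there is ε > 0 such that for all m ∈ (α m₀, α m₀ + ε): V_ρ(m) = α V_ν(m/α) + m(m − α m₀)(1/α − 1). -/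
open MeasureTheory Filter Topology Set

/-- The K-transform (self-energy) `K_ν(z) = z - 1/G_ν(z)`. -/
noncomputable def kT (ν : Measure ℝ) (z : ℝ) : ℝ := z - (cauchyT ν z)⁻¹

/-- The Cauchy transform at a complex argument. -/
noncomputable def cauchyTC (ν : Measure ℝ) (z : ℂ) : ℂ := ∫ x, (z - (x : ℂ))⁻¹ ∂ν

/-- The K-transform at a complex argument. -/
noncomputable def kTC (ν : Measure ℝ) (z : ℂ) : ℂ := z - (cauchyTC ν z)⁻¹

/-- `M_ν(θ) = ∫ 1/(1-θx) dν(x)`. -/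
noncomputable def Mgen (ν : Measure ℝ) (θ : ℝ) : ℝ := ∫ x, (1 - θ * x)⁻¹ ∂ν

/-- The mean of `P_{(θ,ν)}`: `k_ν(θ) = (M_ν(θ) - 1)/(θ M_ν(θ))`. -/
noncomputable def kMean (ν : Measure ℝ) (θ : ℝ) : ℝ := (Mgen ν θ - 1) / (θ * Mgen ν θ)

/-- `B(ν) = max(0, sup supp(ν)) = 1/θ₊`. -/
noncomputable def Bv (ν : Measure ℝ) : ℝ := max 0 (sInf {b : ℝ | ν (Set.Ioi b) = 0})

/-- Pseudo-variance function `𝕍_ν(m) = m (1/ψ_ν(m) - m)`, expressed through the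
inverse `ψ` of the mean parametrization `k_ν`. -/
noncomputable def pseudoVar (ψ : ℝ → ℝ) (m : ℝ) : ℝ := m * ((ψ m)⁻¹ - m)

/-!
Since `K_ρ = α K_ν` on the upper half-plane, `G_ρ = 1 / (z - α K_ν)` there. Far to the right of
the support of `ν`, `K_ν` is continuous up to the real axis and real on it, and
`x - α K_ν(x) > 0`; so `Im G_ρ` is bounded near the axis and has boundary value `0`, and Stieltjes
inversion shows that `ρ` has no mass there. Taking boundary values then gives `K_ρ = α K_ν` on a
half-line, i.e. `k_ρ(θ) = α k_ν(θ)` for small `θ > 0`, because `k_μ(θ) = K_μ(1/θ)`. Hence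
`ψ_ρ(m) = ψ_ν(m/α)`, and the variance formula is algebra. Every mean `m` slightly above `m₀` is
attained, by continuity of `k_ν`, `k_ν(0⁺) = m₀` and the strict Jensen bound `k_ν(θ) > m₀`.
-/

section General

variable {Ω : Type*} [MeasurableSpace Ω] {μ : Measure Ω}

lemma integral_pos_of_ae_pos [NeZero μ] {f : Ω → ℝ} (hfi : Integrable f μ)
    (hf : ∀ᵐ t ∂μ, 0 < f t) : 0 < ∫ t, f t ∂μ := by
  rw [integral_pos_iff_support_of_nonneg_ae (hf.mono fun _ ht => ht.le) hfi, pos_iff_ne_zero]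
  intro h
  obtain ⟨t, hpos, hzero⟩ := (hf.and (measure_eq_zero_iff_ae_notMem.1 h)).exists
  exact hzero hpos.ne'

lemma eq_dirac_of_ae_eq [IsProbabilityMeasure μ] {a : Ω} (h : ∀ᵐ t ∂μ, t = a) :
    μ = Measure.dirac a :=
  calc μ = μ.map id := Measure.map_id.symm
    _ = μ.map fun _ => a := Measure.map_congr h
    _ = Measure.dirac a := by rw [Measure.map_const, measure_univ, one_smul]

end General

lemma exists_eq_of_tendsto_nhdsGT {f : ℝ → ℝ} {s T a m : ℝ} (hsT : s < T)
    (hf : ContinuousOn f (Ioc s T)) (hlim : Tendsto f (𝓝[>] s) (𝓝 a)) (ham : a < m)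
    (hmT : m ≤ f T) : ∃ θ ∈ Ioc s T, f θ = m := by
  obtain ⟨θ₀, hθ₀m, hθ₀⟩ := ((hlim.eventually (gt_mem_nhds ham)).and (Ioo_mem_nhdsGT hsT)).exists
  obtain ⟨θ, hθ, rfl⟩ := intermediate_value_Icc hθ₀.2.le
    (hf.mono fun t ht => ⟨hθ₀.1.trans_le ht.1, ht.2⟩) ⟨hθ₀m.le, hmT⟩
  exact ⟨θ, ⟨hθ₀.1.trans_le hθ.1, hθ.2⟩, rfl⟩

section CauchyTransform

variable {μ : Measure ℝ} {b : ℝ}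

lemma ae_le_of_measure_Ioi_eq_zero (hb : μ (Ioi b) = 0) : ∀ᵐ t ∂μ, t ≤ b := by
  rw [ae_iff]
  simp only [not_le]
  exact hb

lemma norm_inv_sub_ofReal_le {z : ℂ} {t : ℝ} (ht : t ≤ b) (hz : b < z.re) :
    ‖(z - t)⁻¹‖ ≤ (z.re - b)⁻¹ := by
  rw [norm_inv]
  refine inv_anti₀ (by linarith) ?_
  calc z.re - b ≤ (z - t).re := by rw [Complex.sub_re, Complex.ofReal_re]; linarith
    _ ≤ ‖z - t‖ := Complex.re_le_norm _

lemma norm_inv_sub_ofReal_le_inv_im {z : ℂ} (hz : 0 < z.im) (t : ℝ) :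
    ‖(z - t)⁻¹‖ ≤ z.im⁻¹ := by
  rw [norm_inv]
  refine inv_anti₀ hz ?_
  calc z.im = (z - t).im := by simp
    _ ≤ ‖z - t‖ := Complex.im_le_norm _

lemma measurable_cauchyTC [SFinite μ] : Measurable (cauchyTC μ) :=
  ((by fun_prop : Measurable fun p : ℂ × ℝ => (p.1 - p.2)⁻¹).stronglyMeasurable
    |>.integral_prod_right').measurable

lemma cauchyTC_ofReal (x : ℝ) : cauchyTC μ x = cauchyT μ x := by
  rw [cauchyTC, cauchyT, ← integral_complex_ofReal]
  simp

lemma kTC_ofReal (x : ℝ) : kTC μ x = kT μ x := by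
  simp [kTC, kT, cauchyTC_ofReal]

variable [IsFiniteMeasure μ]

lemma integrable_inv_sub_ofReal (hb : μ (Ioi b) = 0) {z : ℂ} (hz : b < z.re) :
    Integrable (fun t : ℝ => (z - t)⁻¹) μ :=
  (integrable_const (z.re - b)⁻¹).mono' (by fun_prop)
    ((ae_le_of_measure_Ioi_eq_zero hb).mono fun _ ht => norm_inv_sub_ofReal_le ht hz)

lemma integrable_inv_sub_ofReal_of_im_pos {z : ℂ} (hz : 0 < z.im) :
    Integrable (fun t : ℝ => (z - t)⁻¹) μ :=
  (integrable_const z.im⁻¹).mono' (by fun_prop)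
    (.of_forall (norm_inv_sub_ofReal_le_inv_im hz))

lemma continuousOn_cauchyTC (hb : μ (Ioi b) = 0) : ContinuousOn (cauchyTC μ) {z | b < z.re} := by
  intro z₀ (hz₀ : b < z₀.re)
  have hnear : ∀ᶠ z in 𝓝 z₀, (z₀.re + b) / 2 < z.re :=
    (Complex.continuous_re.tendsto z₀).eventually (lt_mem_nhds (by linarith))
  refine (continuousAt_of_dominated (.of_forall fun _ => by fun_prop)
    ?_ (integrable_const ((z₀.re + b) / 2 - b)⁻¹) ?_).continuousWithinAt
  · filter_upwards [hnear] with z hz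
    filter_upwards [ae_le_of_measure_Ioi_eq_zero hb] with t ht
    exact (norm_inv_sub_ofReal_le (z := z) ht (by linarith)).trans
      (inv_anti₀ (by linarith) (by linarith))
  · filter_upwards [ae_le_of_measure_Ioi_eq_zero hb] with t ht
    refine ContinuousAt.inv₀ (by fun_prop) fun h => ?_
    have := congrArg Complex.re h
    rw [Complex.sub_re, Complex.ofReal_re, Complex.zero_re] at this
    linarith

lemma re_cauchyTC_pos [NeZero μ] (hb : μ (Ioi b) = 0) {z : ℂ} (hz : b < z.re) :
    0 < (cauchyTC μ z).re := by
  rw [cauchyTC, ← Complex.reCLM_apply, ← ContinuousLinearMap.integral_comp_comm _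
    (integrable_inv_sub_ofReal hb hz)]
  refine integral_pos_of_ae_pos (integrable_inv_sub_ofReal hb hz).re ?_
  filter_upwards [ae_le_of_measure_Ioi_eq_zero hb] with t ht
  have hre : 0 < (z - t).re := by rw [Complex.sub_re, Complex.ofReal_re]; linarith
  simp only [Complex.reCLM_apply, Complex.inv_re]
  exact div_pos hre (Complex.normSq_pos.2 fun h => by simp [h] at hre)

lemma continuousOn_kTC [NeZero μ] (hb : μ (Ioi b) = 0) : ContinuousOn (kTC μ) {z | b < z.re} :=
  continuousOn_id.sub <| (continuousOn_cauchyTC hb).inv₀ fun z hz h =>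
    (re_cauchyTC_pos hb hz).ne' (by rw [h, Complex.zero_re])

end CauchyTransform

section RealAxis

variable {μ : Measure ℝ} {b : ℝ}

lemma Mgen_eq_mul_cauchyT {θ : ℝ} (hθ : θ ≠ 0) : Mgen μ θ = θ⁻¹ * cauchyT μ θ⁻¹ := by
  rw [Mgen, cauchyT, ← integral_const_mul]
  congr 1 with t
  rw [← mul_inv, mul_sub, mul_inv_cancel₀ hθ]

lemma Bv_le_max (hb : μ (Ioi b) = 0) : Bv μ ≤ max 0 b := by
  by_cases hbdd : BddBelow {b : ℝ | μ (Ioi b) = 0}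
  · exact max_le_max le_rfl (csInf_le hbdd hb)
  · simp [Bv, Real.sInf_of_not_bddBelow hbdd]

lemma mul_Bv_lt_one (hb : μ (Ioi b) = 0) {θ : ℝ} (hθ : 0 < θ) (hθb : b < θ⁻¹) :
    θ * Bv μ < 1 := by
  calc θ * Bv μ < θ * θ⁻¹ :=
        mul_lt_mul_of_pos_left ((Bv_le_max hb).trans_lt (max_lt (inv_pos.2 hθ) hθb)) hθ
    _ = 1 := mul_inv_cancel₀ hθ.ne'

variable [IsProbabilityMeasure μ]

lemma integrable_inv_sub (hb : μ (Ioi b) = 0) {x : ℝ} (hx : b < x) :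
    Integrable (fun t => (x - t)⁻¹) μ := by
  refine (integrable_const (x - b)⁻¹).mono' (by fun_prop) ?_
  filter_upwards [ae_le_of_measure_Ioi_eq_zero hb] with t ht
  rw [Real.norm_eq_abs, abs_of_pos (inv_pos.2 (by linarith))]
  exact inv_anti₀ (by linarith) (by linarith)

lemma cauchyT_pos_s8 (hb : μ (Ioi b) = 0) {x : ℝ} (hx : b < x) : 0 < cauchyT μ x := by
  simpa [cauchyTC_ofReal] using re_cauchyTC_pos (μ := μ) (z := x) hb (by simpa using hx)

lemma cauchyT_le_inv_sub (hb : μ (Ioi b) = 0) {x : ℝ} (hx : b < x) :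
    cauchyT μ x ≤ (x - b)⁻¹ := by
  have := integral_mono_ae (integrable_inv_sub hb hx) (integrable_const (x - b)⁻¹)
    ((ae_le_of_measure_Ioi_eq_zero hb).mono fun t ht => inv_anti₀ (by linarith) (by linarith))
  simpa [cauchyT] using this

lemma kT_le (hb : μ (Ioi b) = 0) {x : ℝ} (hx : b < x) : kT μ x ≤ b := by
  have h := (le_inv_comm₀ (cauchyT_pos_s8 hb hx) (by linarith)).1 (cauchyT_le_inv_sub hb hx)
  unfold kT
  linarith

/-- Strict Jensen for the strictly convex function `t ↦ (x - t)⁻¹`. -/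
lemma inv_sub_integral_lt_cauchyT (hb : μ (Ioi b) = 0) (hint : Integrable (fun t => t) μ)
    (hnd : ∀ a : ℝ, μ ≠ Measure.dirac a) {x : ℝ} (hx : b < x) :
    (x - ∫ t, t ∂μ)⁻¹ < cauchyT μ x := by
  have hconv : StrictConvexOn ℝ (Ici (x - b)) fun s : ℝ => s⁻¹ := by
    have := strictConvexOn_zpow (m := -1) (by norm_num) (by norm_num)
    simp only [zpow_neg_one] at this
    exact this.subset (fun s (hs : x - b ≤ s) => show 0 < s by linarith) (convex_Ici _)
  have hmem : ∀ᵐ t ∂μ, x - t ∈ Ici (x - b) := (ae_le_of_measure_Ioi_eq_zero hb).mono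
    fun t ht => show x - b ≤ x - t by linarith
  have hsub : Integrable (fun t => x - t) μ := (integrable_const x).sub hint
  rcases hconv.ae_eq_const_or_map_average_lt
    (continuousOn_inv₀.mono fun s (hs : x - b ≤ s) => show s ≠ 0 by linarith) isClosed_Ici hmem hsub
    (integrable_inv_sub hb hx) with hconst | hlt
  · refine absurd (eq_dirac_of_ae_eq ?_) (hnd (x - ⨍ t, x - t ∂μ))
    filter_upwards [hconst] with t ht
    simp only [Function.const_apply] at ht
    linarith
  · have hmean : ∫ t, x - t ∂μ = x - ∫ t, t ∂μ := by
      rw [integral_sub (integrable_const x) hint, integral_const, probReal_univ, one_smul]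
    rwa [average_eq_integral, average_eq_integral, hmean] at hlt

lemma integral_lt_kT (hb : μ (Ioi b) = 0) (hint : Integrable (fun t => t) μ)
    (hnd : ∀ a : ℝ, μ ≠ Measure.dirac a) {x : ℝ} (hx : b < x) :
    ∫ t, t ∂μ < kT μ x := by
  have hmean : ∫ t, t ∂μ ≤ b := by
    simpa using integral_mono_ae hint (integrable_const b) (ae_le_of_measure_Ioi_eq_zero hb)
  have h := (inv_lt_comm₀ (by linarith) (cauchyT_pos_s8 hb hx)).1
    (inv_sub_integral_lt_cauchyT hb hint hnd hx)
  unfold kT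
  linarith

lemma kMean_eq_kT (hb : μ (Ioi b) = 0) {θ : ℝ} (hθ : 0 < θ) (hθb : b < θ⁻¹) :
    kMean μ θ = kT μ θ⁻¹ := by
  have hG := (cauchyT_pos_s8 hb hθb).ne'
  rw [kMean, Mgen_eq_mul_cauchyT hθ.ne', mul_inv_cancel_left₀ hθ.ne', sub_div,
    mul_div_cancel_right₀ _ hG, one_div, kT]

lemma continuousOn_kMean (hb : μ (Ioi b) = 0) :
    ContinuousOn (kMean μ) {θ | 0 < θ ∧ b < θ⁻¹} := by
  have hinv : ContinuousOn (fun θ : ℝ => ((θ⁻¹ : ℝ) : ℂ)) {θ | 0 < θ ∧ b < θ⁻¹} :=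
    Complex.continuous_ofReal.comp_continuousOn (continuousOn_inv₀.mono fun θ hθ => hθ.1.ne')
  refine (Complex.continuous_re.comp_continuousOn ((continuousOn_kTC hb).comp hinv
    fun θ hθ => by simpa using hθ.2)).congr fun θ hθ => ?_
  show kMean μ θ = (kTC μ ((θ⁻¹ : ℝ) : ℂ)).re
  rw [kTC_ofReal, Complex.ofReal_re, kMean_eq_kT hb hθ.1 hθ.2]

end RealAxis

section UpperHalfPlane

variable {μ : Measure ℝ} [IsFiniteMeasure μ] {z : ℂ}

lemma neg_im_inv_sub_ofReal (z : ℂ) (t : ℝ) :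
    -((z - t)⁻¹).im = z.im / ((z.re - t) ^ 2 + z.im ^ 2) := by
  simp [Complex.inv_im, Complex.normSq_apply, neg_div, sq]

lemma integrable_poissonKernel (hz : 0 < z.im) :
    Integrable (fun t : ℝ => z.im / ((z.re - t) ^ 2 + z.im ^ 2)) μ :=
  (integrable_inv_sub_ofReal_of_im_pos hz).im.neg.congr
    (.of_forall fun t => neg_im_inv_sub_ofReal z t)

lemma neg_im_cauchyTC (hz : 0 < z.im) :
    -(cauchyTC μ z).im = ∫ t, z.im / ((z.re - t) ^ 2 + z.im ^ 2) ∂μ := by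
  rw [cauchyTC, ← Complex.imCLM_apply, ← ContinuousLinearMap.integral_comp_comm _
    (integrable_inv_sub_ofReal_of_im_pos hz), ← integral_neg]
  simp only [Complex.imCLM_apply, neg_im_inv_sub_ofReal]

lemma im_cauchyTC_neg [NeZero μ] (hz : 0 < z.im) : (cauchyTC μ z).im < 0 := by
  rw [← neg_pos, neg_im_cauchyTC hz]
  exact integral_pos_of_ae_pos (integrable_poissonKernel hz) (.of_forall fun t => by positivity)

end UpperHalfPlane

section StieltjesInversion

open Real

lemma integral_Ioc_poissonKernel {y : ℝ} (hy : 0 < y) (t : ℝ) {c d : ℝ} (hcd : c ≤ d) :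
    ∫ x in Ioc c d, y / ((x - t) ^ 2 + y ^ 2) = arctan ((d - t) / y) - arctan ((c - t) / y) := by
  have hcont : Continuous fun x : ℝ => y / ((x - t) ^ 2 + y ^ 2) :=
    continuous_const.div (by fun_prop) fun x => by positivity
  rw [← intervalIntegral.integral_of_le hcd]
  refine intervalIntegral.integral_eq_sub_of_hasDerivAt (f := fun x => arctan ((x - t) / y))
    (fun x _ => ?_) (hcont.intervalIntegrable _ _)
  refine (((hasDerivAt_id' x).sub_const t).div_const y).arctan.congr_deriv ?_
  field_simp
  ring

lemma pi_div_two_le_arctan_sub {y : ℝ} (hy : 0 < y) (hy1 : y ≤ 1) {c d t : ℝ} (ht : t ∈ Ioc c d) :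
    π / 2 ≤ arctan ((d + 1 - t) / y) - arctan ((c - 1 - t) / y) := by
  have hup : 1 ≤ (d + 1 - t) / y := by rw [le_div_iff₀ hy]; linarith [ht.2]
  have hdown : (c - 1 - t) / y ≤ -1 := by rw [div_le_iff₀ hy]; linarith [ht.1]
  have h1 := arctan_strictMono.monotone hup
  have h2 := arctan_strictMono.monotone hdown
  rw [arctan_one] at h1
  rw [arctan_neg, arctan_one] at h2
  linarith

lemma tendsto_comp_add_mul_I {E : Type*} [TopologicalSpace E] {g : ℂ → E} {a x : ℝ}
    (hg : ContinuousOn g (Ici a ×ℂ Ici 0)) (hx : a ≤ x) :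
    Tendsto (fun y : ℝ => g (x + y * Complex.I)) (𝓝[>] 0) (𝓝 (g x)) := by
  have hpath : ContinuousWithinAt (fun y : ℝ => (x : ℂ) + y * Complex.I) (Ici 0) 0 :=
    (by fun_prop : Continuous fun y : ℝ => (x : ℂ) + y * Complex.I).continuousWithinAt
  have := (hg x (Complex.mem_reProdIm.2 ⟨by simpa using hx, by simp⟩)).comp_of_eq hpath
    (fun y (hy : 0 ≤ y) => Complex.mem_reProdIm.2 ⟨by simpa using hx, by simpa using hy⟩)
    (by simp)
  simpa [Function.comp_def] using this.tendsto.mono_left (nhdsWithin_mono _ Ioi_subset_Ici_self)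

variable {ρ : Measure ℝ} [IsProbabilityMeasure ρ]

lemma integral_Ioc_neg_im_cauchyTC {y : ℝ} (hy : 0 < y) {c d : ℝ} (hcd : c ≤ d) :
    ∫ x in Ioc c d, -(cauchyTC ρ (x + y * Complex.I)).im
      = ∫ t, (arctan ((d - t) / y) - arctan ((c - t) / y)) ∂ρ := by
  have hP : ∀ x : ℝ, -(cauchyTC ρ (x + y * Complex.I)).im = ∫ t, y / ((x - t) ^ 2 + y ^ 2) ∂ρ :=
    fun x => by simpa using neg_im_cauchyTC (μ := ρ) (z := x + y * Complex.I) (by simpa using hy)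
  simp_rw [hP, ← integral_Ioc_poissonKernel hy _ hcd]
  have hcont : Continuous fun p : ℝ × ℝ => y / ((p.1 - p.2) ^ 2 + y ^ 2) :=
    continuous_const.div (by fun_prop) fun p => by positivity
  refine integral_integral_swap ((integrable_const y⁻¹).mono' hcont.aestronglyMeasurable
    (.of_forall fun p => ?_))
  rw [Real.norm_eq_abs, Function.uncurry_apply_pair, abs_of_pos (by positivity),
    div_le_iff₀ (by positivity), inv_mul_eq_div, le_div_iff₀ hy]
  nlinarith [sq_nonneg (p.1 - p.2)]

/-- Stieltjes inversion: `∫_{c-1}^{d+1} -Im G_ρ(x + iy) dx ≥ (π/2) ρ(c, d]` for `0 < y ≤ 1`, while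
the hypotheses make the left side tend to `0`. -/
theorem measure_Ioc_eq_zero_of_im_cauchyTC {c d M : ℝ} (hcd : c ≤ d)
    (hbdd : ∀ x ∈ Icc (c - 1) (d + 1), ∀ y ∈ Ioc (0 : ℝ) 1,
      |(cauchyTC ρ (x + y * Complex.I)).im| ≤ M)
    (hlim : ∀ x ∈ Icc (c - 1) (d + 1),
      Tendsto (fun y : ℝ => (cauchyTC ρ (x + y * Complex.I)).im) (𝓝[>] 0) (𝓝 0)) :
    ρ (Ioc c d) = 0 := by
  set A : ℝ → ℝ := fun y => ∫ x in Ioc (c - 1) (d + 1), -(cauchyTC ρ (x + y * Complex.I)).im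
  have hI : Ioc (0 : ℝ) 1 ∈ 𝓝[>] (0 : ℝ) := Ioc_mem_nhdsGT one_pos
  have hA : Tendsto A (𝓝[>] 0) (𝓝 0) := by
    have := tendsto_integral_filter_of_dominated_convergence (μ := volume.restrict _)
      (F := fun (y x : ℝ) => -(cauchyTC ρ (x + y * Complex.I)).im) (fun _ => |M|) ?_ ?_
      (integrable_const |M|) ((ae_restrict_mem measurableSet_Ioc).mono fun x hx =>
        (hlim x (Ioc_subset_Icc_self hx)).neg)
    · simpa using this
    · exact .of_forall fun y => (Complex.measurable_im.comp
        (measurable_cauchyTC.comp (by fun_prop))).neg.aestronglyMeasurable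
    · filter_upwards [hI] with y hy
      filter_upwards [ae_restrict_mem measurableSet_Ioc] with x hx
      rw [norm_neg, Real.norm_eq_abs]
      exact (hbdd x (Ioc_subset_Icc_self hx) y hy).trans (le_abs_self M)
  have hlow : ∀ y ∈ Ioc (0 : ℝ) 1, π / 2 * ρ.real (Ioc c d) ≤ A y := by
    rintro y ⟨hy, hy1⟩
    simp only [A]
    rw [integral_Ioc_neg_im_cauchyTC hy (by linarith), mul_comm, ← smul_eq_mul,
      ← integral_indicator_const _ measurableSet_Ioc]
    refine integral_mono ((integrable_const _).indicator measurableSet_Ioc) ?_ fun t => ?_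
    · refine (integrable_const π).mono' (by fun_prop : Continuous _).aestronglyMeasurable
        (.of_forall fun t => ?_)
      rw [Real.norm_eq_abs, abs_le]
      constructor <;> linarith [neg_pi_div_two_lt_arctan ((d + 1 - t) / y),
        arctan_lt_pi_div_two ((d + 1 - t) / y), neg_pi_div_two_lt_arctan ((c - 1 - t) / y),
        arctan_lt_pi_div_two ((c - 1 - t) / y)]
    · by_cases ht : t ∈ Ioc c d
      · simpa [ht] using pi_div_two_le_arctan_sub hy hy1 ht
      · simp only [indicator_of_notMem ht, sub_nonneg]
        exact arctan_strictMono.monotone (div_le_div_of_nonneg_right (by linarith) hy.le)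
  have hzero : π / 2 * ρ.real (Ioc c d) ≤ 0 :=
    ge_of_tendsto hA (Filter.mem_of_superset hI hlow)
  have : ρ.real (Ioc c d) = 0 := by nlinarith [pi_pos, measureReal_nonneg (μ := ρ) (s := Ioc c d)]
  exact (measureReal_eq_zero_iff).1 this

theorem measure_Ioi_eq_zero_of_continuousOn {a : ℝ} {g : ℂ → ℂ}
    (hg : ContinuousOn g (Ici a ×ℂ Ici 0))
    (hgρ : ∀ z : ℂ, a ≤ z.re → 0 < z.im → cauchyTC ρ z = g z)
    (hreal : ∀ x : ℝ, a ≤ x → (g x).im = 0) :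
    ρ (Ioi (a + 1)) = 0 := by
  have hIoc : ∀ d, a + 1 ≤ d → ρ (Ioc (a + 1) d) = 0 := by
    intro d hd
    have hK : Icc a (d + 1) ×ℂ Icc 0 1 ⊆ Ici a ×ℂ Ici 0 := fun z hz => ⟨hz.1.1, hz.2.1⟩
    obtain ⟨M, hM⟩ := (isCompact_Icc.reProdIm isCompact_Icc).exists_bound_of_continuousOn
      (hg.mono hK)
    refine measure_Ioc_eq_zero_of_im_cauchyTC hd (M := M) (fun x hx y hy => ?_) fun x hx => ?_
    · have hxa : a ≤ x := by linarith [hx.1]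
      rw [hgρ _ (by simpa using hxa) (by simpa using hy.1)]
      exact (Complex.abs_im_le_norm _).trans
        (hM _ ⟨by simpa using ⟨hxa, hx.2⟩, by simpa using ⟨hy.1.le, hy.2⟩⟩)
    · have hxa : a ≤ x := by linarith [hx.1]
      have hlim := (Complex.continuous_im.tendsto _).comp (tendsto_comp_add_mul_I hg hxa)
      rw [Function.comp_def, hreal x hxa] at hlim
      refine hlim.congr' ?_
      filter_upwards [self_mem_nhdsWithin] with y (hy : 0 < y)
      rw [hgρ _ (by simpa using hxa) (by simpa using hy)]
  have hcover : ⋃ n : ℕ, Ioc (a + 1) (a + 1 + n) = Ioi (a + 1) :=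
    iUnion_Ioc_eq_Ioi_self_iff.2 fun t _ =>
      (exists_nat_ge (t - (a + 1))).imp fun _ hn => by linarith
  rw [← hcover, measure_iUnion_null_iff]
  exact fun n => hIoc _ (by simp)

end StieltjesInversion

section BooleanPower

variable {ν ρ : Measure ℝ} {α b : ℝ}

lemma cauchyTC_eq_inv_of_kTC_eq (hK : ∀ z : ℂ, 0 < z.im → kTC ρ z = α * kTC ν z) {z : ℂ}
    (hz : 0 < z.im) : cauchyTC ρ z = (z - α * kTC ν z)⁻¹ := by
  rw [← hK z hz, kTC, sub_sub_cancel, inv_inv]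

variable [IsProbabilityMeasure ν] [IsProbabilityMeasure ρ]

theorem measure_Ioi_eq_zero_of_kTC_eq (hb : ν (Ioi b) = 0) (hα : 0 ≤ α)
    (hK : ∀ z : ℂ, 0 < z.im → kTC ρ z = α * kTC ν z) {a : ℝ} (hba : b < a)
    (hαba : α * b < a) : ρ (Ioi (a + 1)) = 0 := by
  have hregion : Ici a ×ℂ Ici 0 ⊆ {z : ℂ | b < z.re} := fun z hz => hba.trans_le hz.1
  have hreal : ∀ x : ℝ, a ≤ x → 0 < x - α * kT ν x := by
    intro x hx
    have := mul_le_mul_of_nonneg_left (kT_le hb (hba.trans_le hx)) hα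
    linarith
  have hne : ∀ z ∈ Ici a ×ℂ Ici 0, z - α * kTC ν z ≠ 0 := by
    intro z ⟨hre, him⟩
    rcases (show 0 ≤ z.im from him).eq_or_lt with him0 | himpos
    · rw [← Complex.re_add_im z, ← him0]
      simp only [Complex.ofReal_zero, zero_mul, add_zero, kTC_ofReal]
      exact_mod_cast (hreal z.re hre).ne'
    · intro h
      have hG := cauchyTC_eq_inv_of_kTC_eq hK himpos
      rw [h, inv_zero] at hG
      simpa [hG] using im_cauchyTC_neg (μ := ρ) himpos
  refine measure_Ioi_eq_zero_of_continuousOn (g := fun z => (z - α * kTC ν z)⁻¹)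
    ((continuousOn_id.sub (continuousOn_const.mul ((continuousOn_kTC hb).mono hregion))).inv₀ hne)
    (fun z _ hz => cauchyTC_eq_inv_of_kTC_eq hK hz) fun x _ => ?_
  rw [kTC_ofReal]
  exact_mod_cast Complex.ofReal_im (x - α * kT ν x)⁻¹

theorem kT_eq_of_kTC_eq (hb : ν (Ioi b) = 0) {R : ℝ} (hR : ρ (Ioi R) = 0)
    (hK : ∀ z : ℂ, 0 < z.im → kTC ρ z = α * kTC ν z) {x : ℝ} (hbx : b < x) (hRx : R < x) :
    kT ρ x = α * kT ν x := by
  have hν := tendsto_comp_add_mul_I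
    ((continuousOn_kTC hb).mono fun z (hz : z ∈ Ici x ×ℂ Ici 0) => hbx.trans_le hz.1) le_rfl
  have hρ := tendsto_comp_add_mul_I
    ((continuousOn_kTC hR).mono fun z (hz : z ∈ Ici x ×ℂ Ici 0) => hRx.trans_le hz.1) le_rfl
  have heq : ∀ᶠ y : ℝ in 𝓝[>] 0, kTC ρ (x + y * Complex.I) = α * kTC ν (x + y * Complex.I) := by
    filter_upwards [self_mem_nhdsWithin] with y (hy : 0 < y)
    exact hK _ (by simpa using hy)
  have := tendsto_nhds_unique (hρ.congr' heq) (hν.const_mul (α : ℂ))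
  rw [kTC_ofReal, kTC_ofReal] at this
  exact_mod_cast this

theorem exists_kMean_eq_mul_of_kTC_eq (hb : ν (Ioi b) = 0) (hα : 0 ≤ α)
    (hK : ∀ z : ℂ, 0 < z.im → kTC ρ z = α * kTC ν z) :
    ∃ T > 0, ∀ θ ∈ Ioc 0 T, b < θ⁻¹ ∧ θ * Bv ρ < 1 ∧ kMean ρ θ = α * kMean ν θ := by
  set a : ℝ := |b| + α * |b| + 1
  have hαb : 0 ≤ α * |b| := mul_nonneg hα (abs_nonneg b)
  have hba : b < a := by linarith [le_abs_self b]
  have hρ : ρ (Ioi (a + 1)) = 0 := measure_Ioi_eq_zero_of_kTC_eq hb hα hK hba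
    (by linarith [mul_le_mul_of_nonneg_left (le_abs_self b) hα, abs_nonneg b])
  refine ⟨(a + 2)⁻¹, inv_pos.2 (by linarith [abs_nonneg b]), fun θ hθ => ?_⟩
  have hinv : a + 1 < θ⁻¹ := by
    linarith [(le_inv_comm₀ hθ.1 (by linarith [abs_nonneg b])).1 hθ.2]
  refine ⟨by linarith, mul_Bv_lt_one hρ hθ.1 hinv, ?_⟩
  rw [kMean_eq_kT hb hθ.1 (by linarith), kMean_eq_kT hρ hθ.1 hinv,
    kT_eq_of_kTC_eq hb hρ hK (by linarith) hinv]

end BooleanPower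

noncomputable def varianceOfPseudoVar (ψ : ℝ → ℝ) (m0 m : ℝ) : ℝ := pseudoVar ψ m / m * (m - m0)

lemma pseudoVar_div_eq (ψ : ℝ → ℝ) {m0 m : ℝ} (hm : m ≠ m0) :
    pseudoVar ψ m / m = varianceOfPseudoVar ψ m0 m / (m - m0) := by
  rw [varianceOfPseudoVar, mul_div_cancel_right₀ _ (sub_ne_zero.2 hm)]

lemma varianceOfPseudoVar_rescale {ψν ψρ : ℝ → ℝ} {α m0 m : ℝ} (hα : α ≠ 0)
    (hψ : ψρ m = ψν (m / α)) :
    varianceOfPseudoVar ψρ (α * m0) m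
      = α * varianceOfPseudoVar ψν m0 (m / α) + m * (m - α * m0) * (1 / α - 1) := by
  rcases eq_or_ne m 0 with rfl | hm
  · simp [varianceOfPseudoVar]
  · simp only [varianceOfPseudoVar, pseudoVar, hψ]
    field_simp
    ring

/-- if `ν` is a non-degenerate probability measure with support bounded
from above and finite mean `m₀ = m₀(ν)`, `α > 0`, and `ρ = ν^{⊎α}` is the boolean
convolution power (characterized by `K_ρ = α K_ν` on the upper half-plane), then the
variance functions `V_ν, V_ρ` of the generated CSK families exist (they are related to
the pseudo-variance functions by `𝕍(m)/m = V(m)/(m - mean)`), and in a right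
neighborhood of `α m₀` one has `V_ρ(m) = α V_ν(m/α) + m (m - α m₀)(1/α - 1)`. -/
theorem boolean_power_variance
    (ν ρ : Measure ℝ) [IsProbabilityMeasure ν] [IsProbabilityMeasure ρ]
    (hnd : ∀ a : ℝ, ν ≠ Measure.dirac a)
    (b : ℝ) (hb : ν (Set.Ioi b) = 0)
    (hint : Integrable (fun x : ℝ => x) ν)
    (m0 : ℝ) (hm0 : m0 = ∫ x, x ∂ν)
    (hm0lim : Tendsto (kMean ν) (𝓝[>] (0 : ℝ)) (𝓝 m0))
    (α : ℝ) (hα : 0 < α)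
    (hK : ∀ z : ℂ, 0 < z.im → kTC ρ z = (α : ℂ) * kTC ν z)
    (ψν ψρ : ℝ → ℝ)
    (hψν : ∀ θ : ℝ, 0 < θ → θ * Bv ν < 1 → ψν (kMean ν θ) = θ)
    (hψρ : ∀ θ : ℝ, 0 < θ → θ * Bv ρ < 1 → ψρ (kMean ρ θ) = θ) :
    ∃ ε > 0, ∃ Vν Vρ : ℝ → ℝ,
      (∀ m : ℝ, m0 < m → m < m0 + ε →
        pseudoVar ψν m / m = Vν m / (m - m0)) ∧
      (∀ m : ℝ, α * m0 < m → m < α * m0 + ε →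
        pseudoVar ψρ m / m = Vρ m / (m - α * m0)) ∧
      (∀ m : ℝ, α * m0 < m → m < α * m0 + ε →
        Vρ m = α * Vν (m / α) + m * (m - α * m0) * (1 / α - 1)) := by
  obtain ⟨T, hT, hθT⟩ := exists_kMean_eq_mul_of_kTC_eq hb hα.le hK
  have hcont : ContinuousOn (kMean ν) (Ioc 0 T) :=
    (continuousOn_kMean hb).mono fun θ hθ => ⟨hθ.1, (hθT θ hθ).1⟩
  have hmT : m0 < kMean ν T := by
    have hbT := (hθT T ⟨hT, le_rfl⟩).1
    rw [kMean_eq_kT hb hT hbT, hm0]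
    exact integral_lt_kT hb hint hnd hbT
  refine ⟨α * (kMean ν T - m0), by nlinarith, varianceOfPseudoVar ψν m0,
    varianceOfPseudoVar ψρ (α * m0), fun m hm _ => pseudoVar_div_eq ψν hm.ne',
    fun m hm _ => pseudoVar_div_eq ψρ hm.ne', fun m hm hmε => ?_⟩
  obtain ⟨θ, hθ, hθm⟩ := exists_eq_of_tendsto_nhdsGT hT hcont hm0lim (m := m / α)
    (by rw [lt_div_iff₀ hα]; linarith) (by rw [div_le_iff₀ hα]; linarith)
  obtain ⟨hbθ, hBvρ, hkρ⟩ := hθT θ hθ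
  have hψν' : ψν (m / α) = θ := hθm ▸ hψν θ hθ.1 (mul_Bv_lt_one hb hθ.1 hbθ)
  have hψρ' : ψρ m = θ := by
    rw [hθm, mul_div_cancel₀ _ hα.ne'] at hkρ
    exact hkρ ▸ hψρ θ hθ.1 hBvρ
  exact varianceOfPseudoVar_rescale hα.ne' (hψρ'.trans hψν'.symm)
end
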